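/- arXiv:1912.10439 — 2 statements merged into one kernel-verified Lean document; each statement's English description precedes it below -/
import Mathlib

section
/- Let α be an a-cone arc in a rectifiably connected noncomplete metric space D with endpoints x and y, and let z₀ bisect the arclength of α. Then for all points z₁, z₂ ∈ α[x, z₀] with z₂ ∈ α[z₁, z₀] (i.e., z₂ between z₁ and z₀ along α), we have k_D(z₁, z₂) ≤ ℓ_{k_D}(α[z₁,z₂]) ≤ 2a·log(1 + 2ℓ(α[z₁,z₂])/d_D(z₁)). -/
open Set Metric

noncomputable section

variable {D : Type*} [MetricSpace D]

/-- Distance from a point to the metric boundary `∂D = D̄ \ D`. -/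
def dB (x : D) : ℝ :=
  Metric.infDist (x : UniformSpace.Completion D)
    ((Set.range ((↑) : D → UniformSpace.Completion D))ᶜ)

/-- A rectifiable curve from `x` to `y`, given in (1-Lipschitz) arclength
parametrization on `[0, L]`; `L` is its length. -/
structure Curve (D : Type*) [MetricSpace D] (x y : D) where
  L : ℝ
  hL : 0 ≤ L
  γ : ℝ → D
  lip : LipschitzOnWith 1 γ (Set.Icc 0 L)
  h0 : γ 0 = x
  h1 : γ L = y

/-- Quasihyperbolic length of the subarc with parameters in `[s,t]`. -/
def Curve.qhLenOn {x y : D} (c : Curve D x y) (s t : ℝ) : ℝ :=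
  ∫ u in s..t, 1 / dB (c.γ u)

/-- Quasihyperbolic length of a curve. -/
def Curve.qhLen {x y : D} (c : Curve D x y) : ℝ := c.qhLenOn 0 c.L

/-- The quasihyperbolic distance: infimum of quasihyperbolic lengths of curves. -/
def qhDist (x y : D) : ℝ := sInf {r : ℝ | ∃ c : Curve D x y, r = c.qhLen}

/-- Every pair of points is joined by a rectifiable curve. -/
def RectConnected (D : Type*) [MetricSpace D] : Prop :=
  ∀ x y : D, Nonempty (Curve D x y)

/-- A length space: distance is the infimum of lengths of joining curves. -/
def IsLengthSpace (D : Type*) [MetricSpace D] : Prop :=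
  ∀ x y : D, ∀ ε > 0, ∃ c : Curve D x y, c.L ≤ dist x y + ε

/-- A quasihyperbolic geodesic. -/
def Curve.IsQHGeodesic {x y : D} (c : Curve D x y) : Prop :=
  ∀ s t : ℝ, s ∈ Set.Icc 0 c.L → t ∈ Set.Icc 0 c.L → s ≤ t →
    c.qhLenOn s t = qhDist (c.γ s) (c.γ t)

/-- An `a`-cone arc: `min{ℓ(α[x,z]), ℓ(α[z,y])} ≤ a·d_D(z)` for all `z` on the arc. -/
def Curve.IsConeArc {x y : D} (c : Curve D x y) (a : ℝ) : Prop :=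
  ∀ t ∈ Set.Icc 0 c.L, min t (c.L - t) ≤ a * dB (c.γ t)

/-- A `(λ,μ)`-quasigeodesic with respect to the quasihyperbolic metric. -/
def Curve.IsQuasigeodesic {x y : D} (c : Curve D x y) (lam mu : ℝ) : Prop :=
  ∀ s t : ℝ, s ∈ Set.Icc 0 c.L → t ∈ Set.Icc 0 c.L → s ≤ t →
    c.qhLenOn s t ≤ lam * qhDist (c.γ s) (c.γ t) + mu

/-- An `a`-John space. -/
def IsJohn (D : Type*) [MetricSpace D] (a : ℝ) : Prop :=
  ∀ x y : D, ∃ c : Curve D x y, c.IsConeArc a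

/-- A `c`-uniform space. -/
def IsUniform (D : Type*) [MetricSpace D] (c : ℝ) : Prop :=
  ∀ x y : D, ∃ α : Curve D x y, α.L ≤ c * dist x y ∧ α.IsConeArc c

/-- Gromov product with respect to the quasihyperbolic metric. -/
def gromovProd (x y w : D) : ℝ := (qhDist x w + qhDist y w - qhDist x y) / 2

/-- `(D,k)` is Gromov `δ`-hyperbolic (four-point condition). -/
def QHHyperbolic (D : Type*) [MetricSpace D] (δ : ℝ) : Prop :=
  ∀ x y z w : D, min (gromovProd x y w) (gromovProd y z w) - δ ≤ gromovProd x z w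

/-- `(D,k)` is `K`-roughly starlike with respect to `w`. -/
def RoughlyStarlike (D : Type*) [MetricSpace D] (K : ℝ) (w : D) : Prop :=
  ∀ x : D, ∃ γ : ℝ → D, γ 0 = w ∧
    (∀ s t : ℝ, 0 ≤ s → 0 ≤ t → qhDist (γ s) (γ t) = |s - t|) ∧
    ∃ t : ℝ, 0 ≤ t ∧ qhDist x (γ t) ≤ K

/-- The `h`-coarse quasihyperbolic length of the part of the curve `β` with
parameters in `[s,t]`. -/
def coarseLen {E : Type*} [MetricSpace E] (β : ℝ → E) (s t h : ℝ) : ℝ :=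
  sSup {r : ℝ | ∃ n : ℕ, ∃ u : Fin (n + 1) → ℝ, Monotone u ∧
    (∀ i, u i ∈ Set.Icc s t) ∧
    (∀ i : Fin n, h ≤ qhDist (β (u i.castSucc)) (β (u i.succ))) ∧
    r = ∑ i : Fin n, qhDist (β (u i.castSucc)) (β (u i.succ))}

/-- `λ`-annular quasiconvexity. -/
def AnnularQuasiconvex (X : Type*) [MetricSpace X] (lam : ℝ) : Prop :=
  ∀ (x : X) (r r' : ℝ), 0 < r' → r' < r →
    ∀ y z : X, y ∈ Metric.ball x r \ Metric.ball x r' →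
      z ∈ Metric.ball x r \ Metric.ball x r' →
      ∃ c : Curve X y z, c.L ≤ lam * dist y z ∧
        ∀ t ∈ Set.Icc 0 c.L, c.γ t ∈ Metric.ball x (lam * r) \ Metric.ball x (r' / lam)

end

/-!
Write `d = d_D(z₁)` with `z₁ = α(s)`. For `s ≤ u ≤ ℓ(α)/2` the distance to the boundary grows
at least linearly, `d + 2(u - s) ≤ 4a·d_D(α(u))`: while `u - s ≤ d/2` because `d_D` is
1-Lipschitz along the arclength parametrization, afterwards because the cone condition reads
`u ≤ a·d_D(α(u))` on the first half of `α`. Integrating the reciprocal of this linear minorant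
gives exactly `2a·log(1 + 2(t - s)/d)`. The bound `k_D ≤ ℓ_{k_D}` holds because the subarc is
one of the curves in the infimum defining `k_D`.
-/

open MeasureTheory

theorem integral_one_div_le_log_of_linear_le {f : ℝ → ℝ} {s t p q K : ℝ} (hst : s ≤ t)
    (hp : 0 < p) (hq : 0 < q) (hK : 0 < K) (hf : ∀ u ∈ Icc s t, p + q * (u - s) ≤ K * f u) :
    ∫ u in s..t, 1 / f u ≤ K / q * Real.log (1 + q * (t - s) / p) := by
  have hlin : ∀ u ∈ Icc s t, 0 < q * u + (p - q * s) := fun u hu => by nlinarith [hu.1]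
  have hlog : ∫ u in s..t, K * (q * u + (p - q * s))⁻¹
      = K / q * Real.log (1 + q * (t - s) / p) := by
    rw [intervalIntegral.integral_const_mul,
      intervalIntegral.integral_comp_mul_add (fun u => u⁻¹) hq.ne',
      integral_inv_of_pos (by linarith) (by nlinarith), smul_eq_mul, ← mul_assoc,
      ← div_eq_mul_inv]
    congr 2
    field_simp [hp.ne']
    ring
  by_cases hint : IntervalIntegrable (fun u => 1 / f u) volume s t
  · rw [← hlog]
    refine intervalIntegral.integral_mono_on hst hint ?_ fun u hu => ?_
    · exact (continuousOn_const.mul (ContinuousOn.inv₀ (by fun_prop)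
        fun u hu => (hlin u hu).ne')).intervalIntegrable_of_Icc hst
    · have hfu : 0 < f u := pos_of_mul_pos_right (by linarith [hf u hu, hlin u hu]) hK.le
      rw [← div_eq_mul_inv, div_le_div_iff₀ hfu (hlin u hu)]
      linarith [hf u hu]
  · rw [intervalIntegral.integral_undef hint]
    refine mul_nonneg (div_pos hK hq).le (Real.log_nonneg ?_)
    have : 0 ≤ q * (t - s) / p := div_nonneg (mul_nonneg hq.le (by linarith)) hp.le
    linarith

theorem not_intervalIntegrable_one_div_of_le_sub {f : ℝ → ℝ} {s t : ℝ} (hst : s < t)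
    (hf : ∀ u ∈ Ioc s t, 0 < f u ∧ f u ≤ u - s) :
    ¬ IntervalIntegrable (fun u => 1 / f u) volume s t := by
  intro hint
  have hsub : IntervalIntegrable (fun u => (u - s)⁻¹) volume s t := by
    rw [intervalIntegrable_iff_integrableOn_Ioc_of_le hst.le] at hint ⊢
    refine hint.mono' (by fun_prop) ?_
    filter_upwards [ae_restrict_mem measurableSet_Ioc] with u hu
    obtain ⟨hpos, hle⟩ := hf u hu
    rw [Real.norm_eq_abs, abs_of_nonneg (inv_nonneg.mpr (by linarith [hu.1])), one_div]
    exact inv_anti₀ hpos hle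
  rcases intervalIntegrable_sub_inv_iff.mp hsub with h | h
  · exact hst.ne h
  · exact h left_mem_uIcc

section

variable {D : Type*} [MetricSpace D]

theorem dB_nonneg (p : D) : 0 ≤ dB p := infDist_nonneg

theorem lipschitzWith_dB : LipschitzWith 1 (dB : D → ℝ) := by
  have h := (lipschitz_infDist_pt ((range ((↑) : D → UniformSpace.Completion D))ᶜ)).comp
    (UniformSpace.Completion.coe_isometry (α := D)).lipschitz
  rw [mul_one] at h
  exact h

namespace Curve

variable {x y : D} (c : Curve D x y)

def restrict {s t : ℝ} (hs : 0 ≤ s) (hst : s ≤ t) (ht : t ≤ c.L) :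
    Curve D (c.γ s) (c.γ t) where
  L := t - s
  hL := sub_nonneg.mpr hst
  γ u := c.γ (s + u)
  lip := by
    have hmaps : MapsTo (s + ·) (Icc 0 (t - s)) (Icc 0 c.L) := fun u hu =>
      ⟨by linarith [hu.1], by linarith [hu.2]⟩
    have h := c.lip.comp (isometry_vadd ℝ s).lipschitz.lipschitzOnWith hmaps
    rw [mul_one] at h
    exact h
  h0 := by simp
  h1 := by simp

theorem qhLen_restrict {s t : ℝ} (hs : 0 ≤ s) (hst : s ≤ t) (ht : t ≤ c.L) :
    (c.restrict hs hst ht).qhLen = c.qhLenOn s t := by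
  simp [qhLen, qhLenOn, restrict,
    intervalIntegral.integral_comp_add_left (fun u => (dB (c.γ u))⁻¹) s]

theorem qhLen_nonneg : 0 ≤ c.qhLen :=
  intervalIntegral.integral_nonneg c.hL fun _ _ => one_div_nonneg.mpr (dB_nonneg _)

theorem qhDist_le_qhLen : qhDist x y ≤ c.qhLen :=
  csInf_le ⟨0, by rintro _ ⟨c', rfl⟩; exact c'.qhLen_nonneg⟩ ⟨c, rfl⟩

theorem qhDist_le_qhLenOn {s t : ℝ} (hs : 0 ≤ s) (hst : s ≤ t) (ht : t ≤ c.L) :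
    qhDist (c.γ s) (c.γ t) ≤ c.qhLenOn s t :=
  c.qhLen_restrict hs hst ht ▸ (c.restrict hs hst ht).qhDist_le_qhLen

theorem abs_dB_sub_dB_le {u v : ℝ} (hu : u ∈ Icc 0 c.L) (hv : v ∈ Icc 0 c.L) :
    |dB (c.γ u) - dB (c.γ v)| ≤ |u - v| := by
  simpa [← Real.dist_eq] using
    ((lipschitzWith_dB.lipschitzOnWith (s := univ)).comp c.lip (mapsTo_univ _ _)).dist_le_mul
      u hu v hv

theorem qhLenOn_eq_zero_of_dB_eq_zero {s t : ℝ} (hs : 0 ≤ s) (hst : s ≤ t) (ht : t ≤ c.L)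
    (h0 : dB (c.γ s) = 0) (hpos : ∀ u ∈ Ioc s t, 0 < dB (c.γ u)) : c.qhLenOn s t = 0 := by
  rcases hst.eq_or_lt with rfl | hst
  · exact intervalIntegral.integral_same
  refine intervalIntegral.integral_undef (not_intervalIntegrable_one_div_of_le_sub hst ?_)
  intro u hu
  have h := (abs_le.mp
    (c.abs_dB_sub_dB_le ⟨by linarith [hu.1], hu.2.trans ht⟩ ⟨hs, by linarith⟩)).2
  rw [h0, abs_of_pos (sub_pos.mpr hu.1)] at h
  exact ⟨hpos u hu, by linarith⟩

variable {c} {a : ℝ}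

theorem IsConeArc.le_mul_dB (hc : c.IsConeArc a) {u : ℝ} (hu : u ∈ Icc 0 (c.L / 2)) :
    u ≤ a * dB (c.γ u) := by
  have h := hc u ⟨hu.1, by linarith [hu.2, c.hL]⟩
  rwa [min_eq_left (by linarith [hu.2])] at h

theorem IsConeArc.dB_add_two_mul_le (hc : c.IsConeArc a) (ha : 1 ≤ a) {s u : ℝ}
    (hs : 0 ≤ s) (hu : u ∈ Icc s (c.L / 2)) :
    dB (c.γ s) + 2 * (u - s) ≤ 4 * a * dB (c.γ u) := by
  have hcone := hc.le_mul_dB ⟨hs.trans hu.1, hu.2⟩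
  have hlip := (abs_le.mp (c.abs_dB_sub_dB_le ⟨hs, by linarith [hu.1, hu.2, c.hL]⟩
    ⟨hs.trans hu.1, by linarith [hu.2, c.hL]⟩)).2
  rw [abs_of_nonpos (by linarith [hu.1])] at hlip
  have hdB : dB (c.γ u) ≤ a * dB (c.γ u) := le_mul_of_one_le_left (dB_nonneg _) ha
  rcases le_total (u - s) (dB (c.γ s) / 2) with hnear | hfar <;> linarith

end Curve

end

theorem stmt4_general {D : Type*} [MetricSpace D]
    (a : ℝ) (ha : 1 ≤ a) (x y : D) (α : Curve D x y) (hcone : α.IsConeArc a)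
    (s t : ℝ) (hs : s ∈ Set.Icc 0 (α.L / 2)) (ht : t ∈ Set.Icc s (α.L / 2)) :
    qhDist (α.γ s) (α.γ t) ≤ α.qhLenOn s t ∧
      α.qhLenOn s t ≤ 2 * a * Real.log (1 + 2 * (t - s) / dB (α.γ s)) := by
  have htL : t ≤ α.L := by linarith [ht.2, α.hL]
  refine ⟨α.qhDist_le_qhLenOn hs.1 ht.1 htL, ?_⟩
  have hlower := fun u (hu : u ∈ Icc s t) =>
    hcone.dB_add_two_mul_le ha hs.1 ⟨hu.1, hu.2.trans ht.2⟩
  rcases (dB_nonneg (α.γ s)).eq_or_lt with hd | hd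
  · -- `x / 0 = 0` makes the bound `0`; the integral is `0` because `1 / dB` is not integrable.
    rw [← hd, div_zero, add_zero, Real.log_one, mul_zero]
    refine (α.qhLenOn_eq_zero_of_dB_eq_zero hs.1 ht.1 htL hd.symm fun u hu => ?_).le
    have := hlower u (Ioc_subset_Icc_self hu)
    exact pos_of_mul_pos_right (a := 4 * a) (by linarith [hu.1]) (by linarith)
  · calc α.qhLenOn s t ≤ 4 * a / 2 * Real.log (1 + 2 * (t - s) / dB (α.γ s)) :=
          integral_one_div_le_log_of_linear_le ht.1 hd two_pos (by linarith) hlower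
      _ = 2 * a * Real.log (1 + 2 * (t - s) / dB (α.γ s)) := by ring

/-- on the first half of an `a`-cone arc,
`k_D(z₁,z₂) ≤ ℓ_{k_D}(α[z₁,z₂]) ≤ 2a·log(1 + 2ℓ(α[z₁,z₂])/d_D(z₁))`. -/
theorem stmt4 {D : Type*} [MetricSpace D]
    (hrc : RectConnected D) (hnc : ¬ CompleteSpace D)
    (a : ℝ) (ha : 1 ≤ a) (x y : D) (α : Curve D x y) (hcone : α.IsConeArc a)
    (s t : ℝ) (hs : s ∈ Set.Icc 0 (α.L / 2)) (ht : t ∈ Set.Icc s (α.L / 2)) :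
    qhDist (α.γ s) (α.γ t) ≤ α.qhLenOn s t ∧
      α.qhLenOn s t ≤ 2 * a * Real.log (1 + 2 * (t - s) / dB (α.γ s)) :=
  stmt4_general a ha x y α hcone s t hs ht
end

section
/- Let D be a domain in a metric space that is c-quasiconvex (each pair of points joined by a curve of length at most c times their distance), satisfies the C_gh-Gehring-Hayman condition, is c₀-LLC, and satisfies the C_bs-ball separation condition. Suppose γ is a quasihyperbolic geodesic in D joining x and y, and z ∈ γ satisfies min{ℓ(γ[x,z]), ℓ(γ[z,y])} = Λ·d_D(z). Then Λ ≤ c·c₀·C_gh·C_bs. -/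
open Set Metric

/-!
Gehring–Hayman and quasiconvexity bound the lengths of the two subarcs of `γ` at `z` by
`c·C_gh·|x - z|` and `c·C_gh·|z - y|`, so `x` and `y` lie outside `B(z, r)` with
`r = Λ·d_D(z)/(c·C_gh)`. LLC₂ joins them by a path avoiding `B(z, r/c₀)`, and ball separation
makes that path enter `B(z, C_bs·d_D(z))`; hence `r/c₀ < C_bs·d_D(z)`.
-/

namespace Curve

variable {D : Type*} [MetricSpace D] {x y : D}

def toPath (γ : Curve D x y) : Path x y where
  toFun s := γ.γ (γ.L * s)
  continuous_toFun :=
    γ.lip.continuousOn.comp_continuous (continuous_const.mul continuous_subtype_val)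
      fun s => ⟨mul_nonneg γ.hL s.2.1, mul_le_of_le_one_right γ.hL s.2.2⟩
  source' := by simp [γ.h0]
  target' := by simp [γ.h1]

def initialArc (γ : Curve D x y) {t : ℝ} (ht : t ∈ Icc 0 γ.L) : Curve D x (γ.γ t) where
  L := t
  hL := ht.1
  γ := γ.γ
  lip := γ.lip.mono (Icc_subset_Icc_right ht.2)
  h0 := γ.h0
  h1 := rfl

def finalArc (γ : Curve D x y) {t : ℝ} (ht : t ∈ Icc 0 γ.L) : Curve D (γ.γ t) y where
  L := γ.L - t
  hL := sub_nonneg.2 ht.2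
  γ u := γ.γ (t + u)
  lip := by
    intro u hu v hv
    simpa only [edist_dist, dist_add_left] using
      γ.lip (show t + u ∈ Icc 0 γ.L from ⟨by linarith [ht.1, hu.1], by linarith [hu.2]⟩)
        (show t + v ∈ Icc 0 γ.L from ⟨by linarith [ht.1, hv.1], by linarith [hv.2]⟩)
  h0 := by simp
  h1 := by simp [γ.h1]

theorem IsQHGeodesic.initialArc {γ : Curve D x y} (hγ : γ.IsQHGeodesic) {t : ℝ}
    (ht : t ∈ Icc 0 γ.L) : (γ.initialArc ht).IsQHGeodesic :=
  fun s u hs hu hsu => hγ s u ⟨hs.1, hs.2.trans ht.2⟩ ⟨hu.1, hu.2.trans ht.2⟩ hsu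

theorem IsQHGeodesic.finalArc {γ : Curve D x y} (hγ : γ.IsQHGeodesic) {t : ℝ}
    (ht : t ∈ Icc 0 γ.L) : (γ.finalArc ht).IsQHGeodesic := by
  intro s u hs hu hsu
  have hL : (γ.finalArc ht).L = γ.L - t := rfl
  rw [hL] at hs hu
  refine (intervalIntegral.integral_comp_add_left (fun v => 1 / dB (γ.γ v)) t).trans ?_
  exact hγ (t + s) (t + u) ⟨by linarith [ht.1, hs.1], by linarith [hs.2]⟩
    ⟨by linarith [ht.1, hu.1], by linarith [hu.2]⟩ (by linarith)

theorem IsQHGeodesic.length_le {c Cgh : ℝ} (hCgh : 0 ≤ Cgh)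
    (hqc : ∀ x y : D, ∃ β : Curve D x y, β.L ≤ c * dist x y)
    (hGH : ∀ (x y : D) (γ : Curve D x y), γ.IsQHGeodesic → ∀ β : Curve D x y, γ.L ≤ Cgh * β.L)
    {γ : Curve D x y} (hγ : γ.IsQHGeodesic) : γ.L ≤ Cgh * (c * dist x y) := by
  obtain ⟨β, hβ⟩ := hqc x y
  exact (hGH x y γ hγ β).trans (mul_le_mul_of_nonneg_left hβ hCgh)

end Curve

theorem lt_mul_of_LLC₂_of_forall_path_meets_ball {X : Type*} [MetricSpace X] {c₀ r ρ : ℝ}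
    (hc₀ : 0 < c₀) (hr : 0 < r)
    (hLLC2 : ∀ (z : X) (r : ℝ), 0 < r → ∀ x y : X,
      x ∉ ball z r → y ∉ ball z r → JoinedIn (ball z (r / c₀))ᶜ x y)
    {x y z : X} (hx : x ∉ ball z r) (hy : y ∉ ball z r)
    (hsep : ∀ p : Path x y, ∃ s, p s ∈ ball z ρ) : r < c₀ * ρ := by
  obtain ⟨q, hq⟩ := hLLC2 z r hr x y hx hy
  obtain ⟨s, hs⟩ := hsep q
  have hout : r / c₀ ≤ dist (q s) z := not_lt.1 (hq s)
  have hin : dist (q s) z < ρ := hs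
  rw [div_le_iff₀ hc₀] at hout
  nlinarith

theorem stmt13_general {D : Type*} [MetricSpace D]
    (c c₀ Cgh Cbs Λ : ℝ) (hc : 1 ≤ c) (hc₀ : 1 ≤ c₀) (hCgh : 1 ≤ Cgh) (hCbs : 1 ≤ Cbs)
    (hqc : ∀ x y : D, ∃ β : Curve D x y, β.L ≤ c * dist x y)
    (hGH : ∀ (x y : D) (γ : Curve D x y), γ.IsQHGeodesic →
      ∀ β : Curve D x y, γ.L ≤ Cgh * β.L)
    (hLLC2 : ∀ (z : D) (r : ℝ), 0 < r → ∀ x y : D,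
      x ∉ Metric.ball z r → y ∉ Metric.ball z r →
      JoinedIn (Metric.ball z (r / c₀))ᶜ x y)
    (hBS : ∀ (x y : D) (γ : Curve D x y), γ.IsQHGeodesic →
      ∀ t ∈ Set.Icc 0 γ.L, ∀ p : Path x y,
        ∃ s, p s ∈ Metric.ball (γ.γ t) (Cbs * dB (γ.γ t)))
    (x y : D) (γ : Curve D x y) (hγ : γ.IsQHGeodesic)
    (t : ℝ) (ht : t ∈ Set.Icc 0 γ.L)
    (hΛ : min t (γ.L - t) = Λ * dB (γ.γ t)) :
    Λ ≤ c * c₀ * Cgh * Cbs := by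
  set z := γ.γ t
  have hsep := hBS x y γ hγ t ht
  have hd : 0 < dB z := by
    obtain ⟨s, hs⟩ := hsep γ.toPath
    exact pos_of_mul_pos_right (nonempty_ball.1 ⟨_, hs⟩) (by linarith)
  rcases le_or_gt Λ 0 with hΛ0 | hΛ0
  · have : 0 ≤ c * c₀ * Cgh * Cbs := by positivity
    linarith
  have hcC : 0 < c * Cgh := by positivity
  set r := Λ * dB z / (c * Cgh)
  have houtside : ∀ w, Λ * dB z ≤ Cgh * (c * dist w z) → w ∉ ball z r := fun w hw => by
    rw [mem_ball, not_lt, div_le_iff₀ hcC]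
    linarith
  have hx : x ∉ ball z r := houtside x <| calc
    Λ * dB z = min t (γ.L - t) := hΛ.symm
    _ ≤ t := min_le_left _ _
    _ ≤ Cgh * (c * dist x z) := (hγ.initialArc ht).length_le (by linarith) hqc hGH
  have hy : y ∉ ball z r := houtside y <| calc
    Λ * dB z = min t (γ.L - t) := hΛ.symm
    _ ≤ γ.L - t := min_le_right _ _
    _ ≤ Cgh * (c * dist z y) := (hγ.finalArc ht).length_le (by linarith) hqc hGH
    _ = Cgh * (c * dist y z) := by rw [dist_comm]
  have hlt := lt_mul_of_LLC₂_of_forall_path_meets_ball (by linarith) (by positivity) hLLC2 hx hy hsep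
  rw [div_lt_iff₀ hcC] at hlt
  nlinarith

/-- in a `c`-quasiconvex domain satisfying the `C_gh`-Gehring-Hayman
condition, the `c₀`-LLC condition, and the `C_bs`-ball separation condition, if `z`
on a quasihyperbolic geodesic `γ[x,y]` has `min{ℓ(γ[x,z]), ℓ(γ[z,y])} = Λ·d_D(z)`,
then `Λ ≤ c·c₀·C_gh·C_bs`. -/
theorem stmt13 {D : Type*} [MetricSpace D] (hnc : ¬ CompleteSpace D)
    (c c₀ Cgh Cbs Λ : ℝ) (hc : 1 ≤ c) (hc₀ : 1 ≤ c₀) (hCgh : 1 ≤ Cgh) (hCbs : 1 ≤ Cbs)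
    (hqc : ∀ x y : D, ∃ β : Curve D x y, β.L ≤ c * dist x y)
    (hGH : ∀ (x y : D) (γ : Curve D x y), γ.IsQHGeodesic →
      ∀ β : Curve D x y, γ.L ≤ Cgh * β.L)
    (hLLC1 : ∀ (z : D) (r : ℝ), 0 < r → ∀ x y : D,
      x ∈ Metric.ball z r → y ∈ Metric.ball z r →
      JoinedIn (Metric.ball z (c₀ * r)) x y)
    (hLLC2 : ∀ (z : D) (r : ℝ), 0 < r → ∀ x y : D,
      x ∉ Metric.ball z r → y ∉ Metric.ball z r →
      JoinedIn (Metric.ball z (r / c₀))ᶜ x y)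
    (hBS : ∀ (x y : D) (γ : Curve D x y), γ.IsQHGeodesic →
      ∀ t ∈ Set.Icc 0 γ.L, ∀ p : Path x y,
        ∃ s, p s ∈ Metric.ball (γ.γ t) (Cbs * dB (γ.γ t)))
    (x y : D) (γ : Curve D x y) (hγ : γ.IsQHGeodesic)
    (t : ℝ) (ht : t ∈ Set.Icc 0 γ.L)
    (hΛ : min t (γ.L - t) = Λ * dB (γ.γ t)) :
    Λ ≤ c * c₀ * Cgh * Cbs :=
  stmt13_general c c₀ Cgh Cbs Λ hc hc₀ hCgh hCbs hqc hGH hLLC2 hBS x y γ hγ t ht hΛ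
end
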